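/- arXiv:2504.21658 — 2 statements merged into one kernel-verified Lean document; each statement's English description precedes it below -/
import Mathlib

section
/- Let η be the standard Gaussian density η(y) = (1/√(2π)) e^{−y²/2}, and for m ≥ 1 define η*_m(y) = (−1)^{m−1} ∑_{j=1}^{m} c_{j,m} y^j η^{(j)}(y), where c_{j,m} are defined recursively by c_{1,1} = −1 and c_{j,m} = (2j/(m−1) − 4) c_{j,m−1} 1_{j<m} + (2/(m−1)) c_{j−1,m−1} 1_{j>1}. Then η*_m(y) = −c_{m,m} y^{2m} η(y) for all y ∈ ℝ; in particular η*_m(y) ≥ 0 for all y. -/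
/-- The coefficients `c_{j,m}` (here `ccoef m j`), defined by `c_{1,1} = -1` and, for `m ≥ 2`,
`c_{j,m} = (2j/(m-1) - 4) c_{j,m-1} 1_{j<m} + (2/(m-1)) c_{j-1,m-1} 1_{j>1}`. -/
noncomputable def ccoef : ℕ → ℕ → ℝ
  | 0, _ => 0
  | 1, j => if j = 1 then -1 else 0
  | (m + 2), j =>
      (if j < m + 2 then (2 * (j : ℝ) / ((m : ℝ) + 1) - 4) * ccoef (m + 1) j else 0) +
      (if 1 < j then (2 / ((m : ℝ) + 1)) * ccoef (m + 1) (j - 1) else 0)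

/-- The standard Gaussian density `η(y) = (1/√(2π)) e^{-y²/2}`. -/
noncomputable def gaussDensity (y : ℝ) : ℝ :=
  (Real.sqrt (2 * Real.pi))⁻¹ * Real.exp (-y ^ 2 / 2)

/-- `η*_m(y) = (-1)^{m-1} ∑_{j=1}^m c_{j,m} y^j η^{(j)}(y)` for the Gaussian density `η`. -/
noncomputable def etaStar (m : ℕ) (y : ℝ) : ℝ :=
  (-1 : ℝ) ^ (m - 1) *
    ∑ j ∈ Finset.Icc 1 m, ccoef m j * y ^ j * iteratedDeriv j gaussDensity y

/-!
Put `f_j(y) = y^j η^{(j)}(y)`. Then `y f_j' = j f_j + f_{j+1}`, and under this identity the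
recursion defining `c_{j,m}` becomes `S_{m+1} = (2/m) y S_m' - 4 S_m` for
`S_m = ∑_j c_{j,m} f_j`, for any smooth `η`. For the Gaussian, `η' = -y η`, and this recursion
maps `s y^{2m} η` to `-(2/m) s y^{2m+2} η`; since `c_{m+1,m+1} = (2/m) c_{m,m}`, induction gives
`S_m = (-1)^m c_{m,m} y^{2m} η`.
-/

open Finset
open scoped ContDiff

lemma sum_Icc_one_eq_sum_range {M : Type*} [AddCommMonoid M] (f : ℕ → M) (n : ℕ) :
    ∑ j ∈ Icc 1 n, f j = ∑ i ∈ range n, f (i + 1) := by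
  rw [← Ico_add_one_right_eq_Icc, sum_Ico_eq_sum_range, Nat.add_sub_cancel]
  simp only [add_comm]

lemma ccoef_add_two (k j : ℕ) : ccoef (k + 2) j =
    (if j < k + 2 then (2 * (j : ℝ) / ((k : ℝ) + 1) - 4) * ccoef (k + 1) j else 0) +
      (if 1 < j then (2 / ((k : ℝ) + 1)) * ccoef (k + 1) (j - 1) else 0) :=
  rfl

lemma ccoef_self_add_two (k : ℕ) :
    ccoef (k + 2) (k + 2) = 2 / ((k : ℝ) + 1) * ccoef (k + 1) (k + 1) := by
  simp [ccoef_add_two]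

theorem ccoef_self_nonpos : ∀ m, ccoef m m ≤ 0
  | 0 => le_rfl
  | 1 => by norm_num [ccoef]
  | k + 2 => by
    rw [ccoef_self_add_two]
    exact mul_nonpos_of_nonneg_of_nonpos (by positivity) (ccoef_self_nonpos (k + 1))

lemma sum_ccoef_add_two_mul (k : ℕ) (g : ℕ → ℝ) :
    ∑ j ∈ Icc 1 (k + 2), ccoef (k + 2) j * g j =
      ∑ j ∈ Icc 1 (k + 1), ccoef (k + 1) j *
        ((2 * (j : ℝ) / ((k : ℝ) + 1) - 4) * g j + 2 / ((k : ℝ) + 1) * g (j + 1)) := by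
  simp only [sum_Icc_one_eq_sum_range, ccoef_add_two, add_mul, mul_add, sum_add_distrib]
  congr 1
  · rw [sum_range_succ, if_neg (by omega), zero_mul, add_zero]
    refine sum_congr rfl fun i hi => ?_
    rw [if_pos (by simp at hi; omega)]
    ring
  · rw [sum_range_succ', if_neg (by omega), zero_mul, add_zero]
    refine sum_congr rfl fun i _ => ?_
    rw [if_pos (by omega), Nat.add_sub_cancel]
    ring

noncomputable def weightedDerivSum (η : ℝ → ℝ) (m : ℕ) (y : ℝ) : ℝ :=
  ∑ j ∈ Icc 1 m, ccoef m j * y ^ j * iteratedDeriv j η y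

section Smooth

variable {η : ℝ → ℝ}

lemma hasDerivAt_pow_mul_iteratedDeriv (hη : ContDiff ℝ ∞ η) (j : ℕ) (y : ℝ) :
    HasDerivAt (fun x => x ^ j * iteratedDeriv j η x)
      (j * y ^ (j - 1) * iteratedDeriv j η y + y ^ j * iteratedDeriv (j + 1) η y) y := by
  have hD := (hη.differentiable_iteratedDeriv j
    (by exact_mod_cast ENat.natCast_lt_top j) y).hasDerivAt
  rw [← iteratedDeriv_succ] at hD
  exact (hasDerivAt_pow j y).mul hD

lemma weightedDerivSum_add_two (hη : ContDiff ℝ ∞ η) (k : ℕ) (y : ℝ) :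
    weightedDerivSum η (k + 2) y =
      2 / ((k : ℝ) + 1) * y * deriv (weightedDerivSum η (k + 1)) y -
        4 * weightedDerivSum η (k + 1) y := by
  have hderiv : HasDerivAt (weightedDerivSum η (k + 1))
      (∑ j ∈ Icc 1 (k + 1), ccoef (k + 1) j *
        (j * y ^ (j - 1) * iteratedDeriv j η y + y ^ j * iteratedDeriv (j + 1) η y)) y := by
    have hsum : weightedDerivSum η (k + 1) =
        fun x => ∑ j ∈ Icc 1 (k + 1), ccoef (k + 1) j * (x ^ j * iteratedDeriv j η x) := by
      ext x
      simp only [weightedDerivSum, mul_assoc]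
    rw [hsum]
    exact HasDerivAt.fun_sum fun j _ =>
      (hasDerivAt_pow_mul_iteratedDeriv hη j y).const_mul (ccoef (k + 1) j)
  rw [hderiv.deriv, weightedDerivSum, weightedDerivSum]
  simp only [mul_assoc, sum_ccoef_add_two_mul, mul_sum, ← sum_sub_distrib]
  refine sum_congr rfl fun j hj => ?_
  obtain ⟨i, rfl⟩ : ∃ i, j = i + 1 := ⟨j - 1, by simp at hj; omega⟩
  rw [Nat.add_sub_cancel]
  push_cast
  ring

end Smooth

lemma hasDerivAt_gaussDensity (y : ℝ) : HasDerivAt gaussDensity (-y * gaussDensity y) y := by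
  have hexp : HasDerivAt (fun x : ℝ => -x ^ 2 / 2) (-y) y :=
    ((hasDerivAt_pow 2 y).fun_neg.div_const 2).congr_deriv (by ring)
  exact (hexp.exp.const_mul (Real.sqrt (2 * Real.pi))⁻¹).congr_deriv (by rw [gaussDensity]; ring)

lemma contDiff_gaussDensity : ContDiff ℝ ∞ gaussDensity := by
  unfold gaussDensity
  fun_prop

lemma gaussDensity_pos (y : ℝ) : 0 < gaussDensity y := by
  unfold gaussDensity
  positivity

theorem weightedDerivSum_gaussDensity : ∀ (m : ℕ) (y : ℝ),
    weightedDerivSum gaussDensity m y = (-1) ^ m * ccoef m m * y ^ (2 * m) * gaussDensity y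
  | 0, y => by simp [weightedDerivSum, ccoef]
  | 1, y => by simp [weightedDerivSum, ccoef, (hasDerivAt_gaussDensity y).deriv, sq, mul_assoc]
  | k + 2, y => by
    set s := (-1 : ℝ) ^ (k + 1) * ccoef (k + 1) (k + 1)
    have hprev : weightedDerivSum gaussDensity (k + 1) =
        fun x => s * x ^ (2 * k + 2) * gaussDensity x :=
      funext (weightedDerivSum_gaussDensity (k + 1))
    have hderiv : HasDerivAt (fun x => s * x ^ (2 * k + 2) * gaussDensity x)
        (s * ((2 * k + 2 : ℕ) * y ^ (2 * k + 1)) * gaussDensity y +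
          s * y ^ (2 * k + 2) * (-y * gaussDensity y)) y :=
      ((hasDerivAt_pow (2 * k + 2) y).const_mul s).mul (hasDerivAt_gaussDensity y)
    rw [weightedDerivSum_add_two contDiff_gaussDensity, hprev, hderiv.deriv, ccoef_self_add_two]
    field_simp
    push_cast
    ring

theorem stmt4_general (m : ℕ) (y : ℝ) :
    etaStar m y = -(ccoef m m) * y ^ (2 * m) * gaussDensity y ∧ 0 ≤ etaStar m y := by
  have h : etaStar m y = -(ccoef m m) * y ^ (2 * m) * gaussDensity y := by
    change (-1) ^ (m - 1) * weightedDerivSum gaussDensity m y = _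
    rw [weightedDerivSum_gaussDensity]
    rcases m with _ | k
    · simp [ccoef]
    · have hsign : (-1 : ℝ) ^ k * (-1) ^ (k + 1) = -1 := by
        rw [← pow_add]
        exact Odd.neg_one_pow ⟨k, by ring⟩
      rw [Nat.add_sub_cancel]
      linear_combination ccoef (k + 1) (k + 1) * y ^ (2 * (k + 1)) * gaussDensity y * hsign
  refine ⟨h, h ▸ mul_nonneg (mul_nonneg ?_ ?_) (gaussDensity_pos y).le⟩
  · exact neg_nonneg.2 (ccoef_self_nonpos m)
  · exact (even_two_mul m).pow_nonneg y

/-- For the standard Gaussian density `η` and every `m ≥ 1`,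
`η*_m(y) = -c_{m,m} y^{2m} η(y)` for all `y`; in particular `η*_m(y) ≥ 0`. -/
theorem stmt4 (m : ℕ) (hm : 1 ≤ m) (y : ℝ) :
    etaStar m y = -(ccoef m m) * y ^ (2 * m) * gaussDensity y ∧ 0 ≤ etaStar m y :=
  stmt4_general m y
end

section
/- Let k ∈ ℕ, L ∈ ℕ*, and let f : [0,∞) → ℝ be of class C^{k+1} with all derivatives up to order k+1 bounded by a constant times 1 + x^L. Define f₀(x) = f(x) − f(0) and (M₋₁ f₀)(x) = f₀(x)/x for x > 0. Then M₋₁ f₀ extends to a C^k function on [0,∞), and there is a constant C (depending only on k) such that for every j ∈ {0, …, k}, sup_{x≥0} |(M₋₁f₀)^{(j)}(x)|/(1 + x^L) ≤ 2^k max_{0≤i≤j+1} sup_{x≥0} |f^{(i)}(x)|/(1 + x^L). -/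
/-!
For `x > 0`, the fundamental theorem of calculus and the substitution `u = t x` give
`(f x - f 0) / x = ∫₀¹ f'(t x) dt`, and the right-hand side is the extension `F`.
Differentiating under the integral sign, `F⁽ʲ⁾(x) = ∫₀¹ tʲ f⁽ʲ⁺¹⁾(t x) dt` for `x > 0`, and at `0`
the one-sided derivative exists because this formula is continuous up to `0`. Since
`0 ≤ t x ≤ x` and `0 ≤ tʲ ≤ 1`, this gives
`|F⁽ʲ⁾(x)| ≤ sup_{[0,x]} |f⁽ʲ⁺¹⁾| ≤ ‖f‖_{j+1,L} (1 + x^L)`.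
-/

/-- The weighted norm `‖f‖_{m,L} = max_{0≤j≤m} sup_{x≥0} |f^{(j)}(x)|/(1+x^L)`
(derivatives taken within `[0,∞)`). -/
noncomputable def normML (m L : ℕ) (f : ℝ → ℝ) : ℝ :=
  ⨆ j : Fin (m + 1), ⨆ x : Set.Ici (0 : ℝ),
    |iteratedDerivWithin (j : ℕ) f (Set.Ici 0) (x : ℝ)| / (1 + (x : ℝ) ^ L)

open Set MeasureTheory Topology Metric

noncomputable def dilationMoment (j : ℕ) (h : ℝ → ℝ) (x : ℝ) : ℝ :=
  ∫ t in Ioc (0 : ℝ) 1, t ^ j * h (t * x)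

section DilationMoment

variable {h h' : ℝ → ℝ} {j : ℕ}

lemma integrableOn_pow_mul_comp_mul (hh : ContinuousOn h (Ici 0)) (j : ℕ) {x : ℝ}
    (hx : 0 ≤ x) : IntegrableOn (fun t : ℝ => t ^ j * h (t * x)) (Ioc 0 1) := by
  have hc : ContinuousOn (fun t : ℝ => t ^ j * h (t * x)) (Icc 0 1) :=
    (continuousOn_pow j).mul (hh.comp (by fun_prop) fun t ht => mul_nonneg ht.1 hx)
  exact hc.integrableOn_Icc.mono_set Ioc_subset_Icc_self

lemma norm_pow_mul_comp_mul_le {t z b M : ℝ} (ht : t ∈ Ioc (0 : ℝ) 1) (hz : z ∈ Icc 0 b)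
    (hM : ∀ y ∈ Icc 0 b, ‖h y‖ ≤ M) : ‖t ^ j * h (t * z)‖ ≤ M := by
  have htz : t * z ∈ Icc 0 b :=
    ⟨mul_nonneg ht.1.le hz.1, (mul_le_of_le_one_left hz.1 ht.2).trans hz.2⟩
  rw [norm_mul, norm_pow, Real.norm_of_nonneg ht.1.le]
  exact (mul_le_of_le_one_left (norm_nonneg _) (pow_le_one₀ ht.1.le ht.2)).trans (hM _ htz)

lemma norm_dilationMoment_le {x M : ℝ} (hx : 0 ≤ x) (hM : ∀ y ∈ Icc 0 x, ‖h y‖ ≤ M) :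
    ‖dilationMoment j h x‖ ≤ M := by
  have := norm_setIntegral_le_of_norm_le_const (μ := volume) (by simp)
    fun t ht => norm_pow_mul_comp_mul_le (j := j) ht ⟨hx, le_rfl⟩ hM
  simpa [dilationMoment] using this

lemma continuousOn_dilationMoment (hh : ContinuousOn h (Ici 0)) (j : ℕ) :
    ContinuousOn (dilationMoment j h) (Ici 0) := by
  intro x₀ hx₀
  obtain ⟨M, hM⟩ := isCompact_Icc.exists_bound_of_continuousOn
    (hh.mono (Icc_subset_Ici_self : Icc (0 : ℝ) (x₀ + 1) ⊆ Ici 0))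
  have hnear : ∀ᶠ x in 𝓝[Ici 0] x₀, x ∈ Icc 0 (x₀ + 1) :=
    inter_mem_nhdsWithin _ (Iic_mem_nhds (lt_add_one x₀))
  refine continuousWithinAt_of_dominated (bound := fun _ => M) ?_ ?_ (integrable_const M) ?_
  · filter_upwards [self_mem_nhdsWithin] with x hx
    exact (integrableOn_pow_mul_comp_mul hh j hx).aestronglyMeasurable
  · filter_upwards [hnear] with x hx
    filter_upwards [ae_restrict_mem measurableSet_Ioc] with t ht
    exact norm_pow_mul_comp_mul_le ht hx hM
  · filter_upwards [ae_restrict_mem measurableSet_Ioc] with t ht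
    have hmaps : MapsTo (t * ·) (Ici (0 : ℝ)) (Ici 0) := fun y hy => mul_nonneg ht.1.le hy
    exact ((hh _ (hmaps hx₀)).comp (continuous_const_mul t).continuousWithinAt hmaps).const_mul _

lemma hasDerivAt_dilationMoment (hh : ContinuousOn h (Ici 0)) (hh' : ContinuousOn h' (Ici 0))
    (hder : ∀ y, 0 < y → HasDerivAt h (h' y) y) {x : ℝ} (hx : 0 < x) :
    HasDerivAt (dilationMoment j h) (dilationMoment (j + 1) h' x) x := by
  obtain ⟨M, hM⟩ := isCompact_Icc.exists_bound_of_continuousOn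
    (hh'.mono (Icc_subset_Ici_self : Icc (0 : ℝ) (2 * x) ⊆ Ici 0))
  have hball : ∀ z ∈ ball x (x / 2), 0 < z ∧ z ≤ 2 * x := by
    intro z hz
    rw [mem_ball, Real.dist_eq, abs_lt] at hz
    constructor <;> linarith
  refine (hasDerivAt_integral_of_dominated_loc_of_deriv_le (μ := volume.restrict (Ioc 0 1))
    (F := fun z t => t ^ j * h (t * z)) (bound := fun _ => M)
    (F' := fun z t => t ^ (j + 1) * h' (t * z)) (ball_mem_nhds x (half_pos hx)) ?_
    (integrableOn_pow_mul_comp_mul hh j hx.le)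
    (integrableOn_pow_mul_comp_mul hh' (j + 1) hx.le).aestronglyMeasurable ?_
    (integrable_const M) ?_).2
  · filter_upwards [eventually_gt_nhds hx] with z hz
    exact (integrableOn_pow_mul_comp_mul hh j hz.le).aestronglyMeasurable
  · filter_upwards [ae_restrict_mem measurableSet_Ioc] with t ht z hz
    exact norm_pow_mul_comp_mul_le ht ⟨(hball z hz).1.le, (hball z hz).2⟩ hM
  · filter_upwards [ae_restrict_mem measurableSet_Ioc] with t ht z hz
    have hchain := ((hder _ (mul_pos ht.1 (hball z hz).1)).comp z
      ((hasDerivAt_id z).const_mul t)).const_mul (t ^ j)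
    rwa [show t ^ j * (h' (t * z) * (t * 1)) = t ^ (j + 1) * h' (t * z) by ring] at hchain

lemma hasDerivWithinAt_dilationMoment (hh : ContinuousOn h (Ici 0))
    (hh' : ContinuousOn h' (Ici 0))
    (hder : ∀ y ∈ Ici (0 : ℝ), HasDerivWithinAt h (h' y) (Ici 0) y) {x : ℝ} (hx : 0 ≤ x) :
    HasDerivWithinAt (dilationMoment j h) (dilationMoment (j + 1) h' x) (Ici 0) x := by
  have hder' : ∀ y, 0 < y → HasDerivAt h (h' y) y := fun y hy =>
    (hder y hy.le).hasDerivAt (Ici_mem_nhds hy)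
  rcases hx.eq_or_lt with rfl | hx
  · refine hasDerivWithinAt_Ici_of_tendsto_deriv (s := Ioi 0)
      (fun z hz =>
        (hasDerivAt_dilationMoment hh hh' hder' hz).differentiableAt.differentiableWithinAt)
      ((continuousOn_dilationMoment hh j 0 self_mem_Ici).mono Ioi_subset_Ici_self)
      self_mem_nhdsWithin ?_
    refine ((continuousOn_dilationMoment hh' (j + 1) 0 self_mem_Ici).mono_left
      (nhdsWithin_mono 0 Ioi_subset_Ici_self)).congr' ?_
    filter_upwards [self_mem_nhdsWithin] with z hz
    exact (hasDerivAt_dilationMoment hh hh' hder' hz).deriv.symm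
  · exact (hasDerivAt_dilationMoment hh hh' hder' hx).hasDerivWithinAt

lemma hasDerivWithinAt_dilationMoment_iteratedDerivWithin {n : ℕ}
    (hh : ContDiffOn ℝ n h (Ici 0)) (hj : j < n) {x : ℝ} (hx : 0 ≤ x) :
    HasDerivWithinAt (dilationMoment j (iteratedDerivWithin j h (Ici 0)))
      (dilationMoment (j + 1) (iteratedDerivWithin (j + 1) h (Ici 0)) x) (Ici 0) x := by
  have hus := uniqueDiffOn_Ici (0 : ℝ)
  refine hasDerivWithinAt_dilationMoment
    (hh.continuousOn_iteratedDerivWithin (by exact_mod_cast hj.le) hus)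
    (hh.continuousOn_iteratedDerivWithin (by exact_mod_cast hj) hus) (fun y hy => ?_) hx
  rw [iteratedDerivWithin_succ]
  exact (hh.differentiableOn_iteratedDerivWithin (by exact_mod_cast hj) hus y hy).hasDerivWithinAt

lemma iteratedDerivWithin_dilationMoment {n : ℕ} (hh : ContDiffOn ℝ n h (Ici 0)) (hj : j ≤ n)
    {x : ℝ} (hx : 0 ≤ x) :
    iteratedDerivWithin j (dilationMoment 0 h) (Ici 0) x =
      dilationMoment j (iteratedDerivWithin j h (Ici 0)) x := by
  induction j generalizing x with
  | zero => simp
  | succ j ih =>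
    have hEq : EqOn (iteratedDerivWithin j (dilationMoment 0 h) (Ici 0))
        (dilationMoment j (iteratedDerivWithin j h (Ici 0))) (Ici 0) :=
      fun y hy => ih (by omega) hy
    rw [iteratedDerivWithin_succ, derivWithin_congr hEq (hEq hx)]
    exact (hasDerivWithinAt_dilationMoment_iteratedDerivWithin hh hj hx).derivWithin
      (uniqueDiffOn_Ici 0 x hx)

lemma contDiffOn_dilationMoment {n : ℕ} (hh : ContDiffOn ℝ n h (Ici 0)) :
    ContDiffOn ℝ n (dilationMoment 0 h) (Ici 0) := by
  refine (contDiffOn_iff_continuousOn_differentiableOn_deriv (uniqueDiffOn_Ici 0)).2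
    ⟨fun m hm => ?_, fun m hm => ?_⟩
  · have hm : m ≤ n := by exact_mod_cast hm
    exact (continuousOn_dilationMoment (hh.continuousOn_iteratedDerivWithin
      (by exact_mod_cast hm) (uniqueDiffOn_Ici 0)) m).congr
      fun x hx => iteratedDerivWithin_dilationMoment hh hm hx
  · have hm : m < n := by exact_mod_cast hm
    have hdiff :
        DifferentiableOn ℝ (dilationMoment m (iteratedDerivWithin m h (Ici 0))) (Ici 0) :=
      fun x hx =>
        (hasDerivWithinAt_dilationMoment_iteratedDerivWithin hh hm hx).differentiableWithinAt
    exact hdiff.congr fun x hx => iteratedDerivWithin_dilationMoment hh hm.le hx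

end DilationMoment

lemma dilationMoment_zero_derivWithin {f : ℝ → ℝ} (hf : ContDiffOn ℝ 1 f (Ici 0)) {x : ℝ}
    (hx : 0 < x) : dilationMoment 0 (derivWithin f (Ici 0)) x = (f x - f 0) / x := by
  have hftc : ∫ u in (0 : ℝ)..x, derivWithin f (Ici 0) u = f x - f 0 := by
    refine intervalIntegral.integral_eq_sub_of_hasDeriv_right_of_le hx.le
      (hf.continuousOn.mono Icc_subset_Ici_self) (fun u hu => ?_) ?_
    · exact ((hf.differentiableOn one_ne_zero u hu.1.le).hasDerivWithinAt.hasDerivAt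
        (Ici_mem_nhds hu.1)).hasDerivWithinAt
    · exact ((hf.continuousOn_derivWithin (uniqueDiffOn_Ici 0) le_rfl).mono
        Icc_subset_Ici_self).intervalIntegrable_of_Icc hx.le
  rw [dilationMoment, ← intervalIntegral.integral_of_le zero_le_one]
  simp only [pow_zero, one_mul]
  rw [intervalIntegral.integral_comp_mul_right _ hx.ne', zero_mul, one_mul, hftc, smul_eq_mul,
    inv_mul_eq_div]

lemma normML_nonneg (m L : ℕ) (f : ℝ → ℝ) : 0 ≤ normML m L f :=
  Real.iSup_nonneg fun _ => Real.iSup_nonneg fun x =>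
    div_nonneg (abs_nonneg _) (add_nonneg zero_le_one (pow_nonneg x.2 L))

lemma div_le_normML {m L i : ℕ} {f : ℝ → ℝ} {C : ℝ}
    (hC : ∀ i ≤ m, ∀ x : ℝ, 0 ≤ x → |iteratedDerivWithin i f (Ici 0) x| ≤ C * (1 + x ^ L))
    (hi : i ≤ m) {x : ℝ} (hx : 0 ≤ x) :
    |iteratedDerivWithin i f (Ici 0) x| / (1 + x ^ L) ≤ normML m L f := by
  have hbdd : BddAbove (range fun y : Ici (0 : ℝ) =>
      |iteratedDerivWithin i f (Ici 0) y| / (1 + (y : ℝ) ^ L)) := by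
    refine ⟨C, ?_⟩
    rintro _ ⟨y, rfl⟩
    exact (div_le_iff₀ (add_pos_of_pos_of_nonneg one_pos (pow_nonneg y.2 L))).2
      (hC i hi y y.2)
  unfold normML
  exact (le_ciSup hbdd ⟨x, hx⟩).trans (le_ciSup (f := fun i : Fin (m + 1) =>
    ⨆ y : Ici (0 : ℝ), |iteratedDerivWithin i f (Ici 0) y| / (1 + (y : ℝ) ^ L))
    (finite_range _).bddAbove ⟨i, by omega⟩)

theorem stmt15_general (k L : ℕ) (f : ℝ → ℝ)
    (hf : ContDiffOn ℝ (k + 1) f (Set.Ici 0))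
    (hbound : ∃ C : ℝ, ∀ i ≤ k + 1, ∀ x : ℝ, 0 ≤ x →
      |iteratedDerivWithin i f (Set.Ici 0) x| ≤ C * (1 + x ^ L)) :
    ∃ F : ℝ → ℝ, ContDiffOn ℝ k F (Set.Ici 0) ∧
      (∀ x : ℝ, 0 < x → F x = (f x - f 0) / x) ∧
      ∀ j ≤ k,
        (⨆ x : Set.Ici (0 : ℝ),
            |iteratedDerivWithin j F (Set.Ici 0) (x : ℝ)| / (1 + (x : ℝ) ^ L)) ≤
          2 ^ k * normML (j + 1) L f := by
  obtain ⟨C, hC⟩ := hbound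
  have hf' : ContDiffOn ℝ k (derivWithin f (Ici 0)) (Ici 0) :=
    hf.derivWithin (uniqueDiffOn_Ici 0) le_rfl
  refine ⟨dilationMoment 0 (derivWithin f (Ici 0)), contDiffOn_dilationMoment hf',
    fun x hx => dilationMoment_zero_derivWithin (hf.of_le (by simp)) hx, fun j hj => ?_⟩
  set N := normML (j + 1) L f
  have hN0 : 0 ≤ N := normML_nonneg _ _ _
  have hweight : ∀ y : ℝ, 0 ≤ y → 0 < 1 + y ^ L := fun y hy =>
    add_pos_of_pos_of_nonneg one_pos (pow_nonneg hy L)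
  have hN : ∀ y, 0 ≤ y → ‖iteratedDerivWithin (j + 1) f (Ici 0) y‖ ≤ N * (1 + y ^ L) :=
    fun y hy => (div_le_iff₀ (hweight y hy)).1
      (div_le_normML (fun i hi => hC i (by omega)) le_rfl hy)
  refine Real.iSup_le (fun ⟨x, hx⟩ => ?_) (mul_nonneg (by positivity) hN0)
  rw [iteratedDerivWithin_dilationMoment hf' hj hx, ← iteratedDerivWithin_succ',
    div_le_iff₀ (hweight x hx), ← Real.norm_eq_abs]
  calc ‖dilationMoment j (iteratedDerivWithin (j + 1) f (Ici 0)) x‖ ≤ N * (1 + x ^ L) :=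
        norm_dilationMoment_le hx fun y hy =>
          (hN y hy.1).trans (mul_le_mul_of_nonneg_left
            (add_le_add_right (pow_le_pow_left₀ hy.1 hy.2 L) 1) hN0)
    _ ≤ 2 ^ k * N * (1 + x ^ L) :=
        mul_le_mul_of_nonneg_right (le_mul_of_one_le_left hN0 (one_le_pow₀ one_le_two))
          (hweight x hx).le

/-- For `f` in the weighted space `C^{k+1}_{pol,L}` on `[0,∞)` (`L ≥ 1`), the function
`(M₋₁f₀)(x) = (f(x) - f(0))/x` extends to a `C^k` function `F` on `[0,∞)` satisfying, for
every `j ∈ {0,…,k}`, `sup_{x≥0} |F^{(j)}(x)|/(1+x^L) ≤ 2^k ‖f‖_{j+1,L}`. -/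
theorem stmt15 (k L : ℕ) (hL : 1 ≤ L) (f : ℝ → ℝ)
    (hf : ContDiffOn ℝ (k + 1) f (Set.Ici 0))
    (hbound : ∃ C : ℝ, ∀ i ≤ k + 1, ∀ x : ℝ, 0 ≤ x →
      |iteratedDerivWithin i f (Set.Ici 0) x| ≤ C * (1 + x ^ L)) :
    ∃ F : ℝ → ℝ, ContDiffOn ℝ k F (Set.Ici 0) ∧
      (∀ x : ℝ, 0 < x → F x = (f x - f 0) / x) ∧
      ∀ j ≤ k,
        (⨆ x : Set.Ici (0 : ℝ),
            |iteratedDerivWithin j F (Set.Ici 0) (x : ℝ)| / (1 + (x : ℝ) ^ L)) ≤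
          2 ^ k * normML (j + 1) L f :=
  stmt15_general k L f hf hbound
end
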